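/- Let q1, q2 > 0 with 1 < 1/(2q1) + 3/(2q2) and q2 ≠ 3/2, and assume Q := 1/q1 + 1/q2 < 1. Then there is a constant C such that for all μ ≥ 2, ∫₀^∞ ∫₀^∞ ( ∫₀^1 ∫₁^μ ρ(t+u, s+v) ds dt )² dv du ≤ C μ^{3 + q2/q1 − 2q2}, where ρ(t,s) = (|t|^{q1} + |s|^{q2})^{-1}. -/

import Mathlib

open MeasureTheory Real Set

noncomputable def rho (q1 q2 t s : ℝ) : ℝ := (|t| ^ q1 + |s| ^ q2)⁻¹

/-!
Since `ρ` decreases in `|t|`, the inner integral is at most `∫₁^μ ρ(u, s + v) ds`. From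
`u^q1 + (s + v)^q2 ≥ max(u^(q1/q2), s, v)^q2`, integrating in `v` and then in `u` (each time a
tail `∫₀^∞ max(a, v)^(-p) dv = p/(p-1) a^(1-p)`, finite because `Q < 1` forces `p > 1`) gives
`∫∫ ρ(u, s + v)² du dv ≲ s^(e-2)` with `e = 3 + q2/q1 - 2 q2`, and `e > 0` is the hypothesis on
`1/(2q1) + 3/(2q2)`. Cauchy–Schwarz in `s` with weight `s^(1 - e/2)` then bounds the whole
integral by a multiple of `(∫₁^μ s^(e/2 - 1) ds)² ≲ μ^e`.
-/

open scoped ENNReal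

lemma sq_lintegral_mul_le_lintegral_sq_mul_lintegral_sq {α : Type*} [MeasurableSpace α]
    {μ : Measure α} {f g : α → ℝ≥0∞} (hf : AEMeasurable f μ) (hg : AEMeasurable g μ) :
    (∫⁻ a, f a * g a ∂μ) ^ 2 ≤ (∫⁻ a, f a ^ 2 ∂μ) * ∫⁻ a, g a ^ 2 ∂μ := by
  have h := ENNReal.lintegral_mul_le_Lp_mul_Lq μ Real.HolderConjugate.two_two hf hg
  simp only [Pi.mul_apply, ENNReal.rpow_two] at h
  have hsqrt : ∀ x : ℝ≥0∞, (x ^ (1 / 2 : ℝ)) ^ 2 = x := fun x => by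
    rw [← ENNReal.rpow_natCast, ← ENNReal.rpow_mul]; norm_num
  calc (∫⁻ a, f a * g a ∂μ) ^ 2
      ≤ ((∫⁻ a, f a ^ 2 ∂μ) ^ (1 / 2 : ℝ) * (∫⁻ a, g a ^ 2 ∂μ) ^ (1 / 2 : ℝ)) ^ 2 := by
        gcongr
    _ = (∫⁻ a, f a ^ 2 ∂μ) * ∫⁻ a, g a ^ 2 ∂μ := by rw [mul_pow, hsqrt, hsqrt]

lemma sq_lintegral_le_lintegral_inv_mul_lintegral_mul_sq {α : Type*} [MeasurableSpace α]
    {μ : Measure α} {w : α → ℝ} {h : α → ℝ≥0∞} (hw : AEMeasurable w μ)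
    (hw0 : ∀ᵐ a ∂μ, 0 < w a) (hh : AEMeasurable h μ) :
    (∫⁻ a, h a ∂μ) ^ 2
      ≤ (∫⁻ a, ENNReal.ofReal (w a)⁻¹ ∂μ) * ∫⁻ a, ENNReal.ofReal (w a) * h a ^ 2 ∂μ := by
  have key := sq_lintegral_mul_le_lintegral_sq_mul_lintegral_sq
    (f := fun a => ENNReal.ofReal √(w a)⁻¹) (g := fun a => ENNReal.ofReal √(w a) * h a)
    (by fun_prop) (by fun_prop)
  convert key using 2 <;> refine lintegral_congr_ae (hw0.mono fun a ha => ?_) <;> dsimp only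
  · rw [← mul_assoc, ← ENNReal.ofReal_mul (by positivity), Real.sqrt_inv,
      inv_mul_cancel₀ (Real.sqrt_ne_zero'.mpr ha), ENNReal.ofReal_one, one_mul]
  · rw [← ENNReal.ofReal_pow (by positivity), Real.sq_sqrt (by positivity)]
  · rw [mul_pow, ← ENNReal.ofReal_pow (by positivity), Real.sq_sqrt ha.le]

lemma lintegral_Ioi_max_rpow_neg {a p : ℝ} (ha : 0 < a) (hp : 1 < p) :
    ∫⁻ v in Ioi 0, ENNReal.ofReal (max a v ^ (-p))
      = ENNReal.ofReal (p / (p - 1) * a ^ (1 - p)) := by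
  have hp' : -p < -1 := by linarith
  have hnear : ∫⁻ v in Ioc 0 a, ENNReal.ofReal (max a v ^ (-p))
      = ENNReal.ofReal (a ^ (-p) * a) := by
    rw [setLIntegral_congr_fun measurableSet_Ioc (fun v hv => by rw [max_eq_left hv.2]),
      setLIntegral_const, Real.volume_Ioc, sub_zero, ← ENNReal.ofReal_mul (by positivity)]
  have hfar : ∫⁻ v in Ioi a, ENNReal.ofReal (max a v ^ (-p))
      = ENNReal.ofReal (-a ^ (-p + 1) / (-p + 1)) := by
    rw [setLIntegral_congr_fun measurableSet_Ioi (fun v hv => by rw [max_eq_right hv.le]),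
      ← integral_Ioi_rpow_of_lt hp' ha, ofReal_integral_eq_lintegral_ofReal
        (integrableOn_Ioi_rpow_of_lt hp' ha)
        ((ae_restrict_mem measurableSet_Ioi).mono fun v hv => rpow_nonneg (ha.trans hv).le _)]
  rw [← Ioc_union_Ioi_eq_Ioi ha.le, lintegral_union measurableSet_Ioi Ioc_disjoint_Ioi_same,
    hnear, hfar, ← ENNReal.ofReal_add (by positivity)
      (div_nonneg_of_nonpos (by simpa using (rpow_pos_of_pos ha _).le) (by linarith))]
  congr 1
  have h1 : p - 1 ≠ 0 := by linarith
  have h2 : -p + 1 ≠ 0 := by linarith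
  rw [show 1 - p = -p + 1 by ring, rpow_add_one ha.ne']
  field_simp
  ring

lemma lintegral_Ioc_one_rpow_le {r m : ℝ} (hr : -1 < r) (hm : 1 ≤ m) :
    ∫⁻ s in Ioc 1 m, ENNReal.ofReal (s ^ r) ≤ ENNReal.ofReal (m ^ (r + 1) / (r + 1)) := by
  have hint : IntegrableOn (fun s : ℝ => s ^ r) (Ioc 1 m) :=
    (intervalIntegrable_iff_integrableOn_Ioc_of_le hm).mp
      (intervalIntegral.intervalIntegrable_rpow' hr)
  rw [← ofReal_integral_eq_lintegral_ofReal hint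
      ((ae_restrict_mem measurableSet_Ioc).mono fun s hs => rpow_nonneg (by linarith [hs.1]) r),
    ← intervalIntegral.integral_of_le hm, integral_rpow (Or.inl hr), one_rpow]
  exact ENNReal.ofReal_le_ofReal (div_le_div_of_nonneg_right (by linarith) (by linarith))

lemma lintegral_sq_lintegral_Ioc_le {X : Type*} [MeasurableSpace X] {ν : Measure X}
    [SFinite ν] {F : ℝ → X → ℝ≥0∞} (hF : Measurable (Function.uncurry F)) {c e m : ℝ}
    (hc : 0 ≤ c) (he : 0 < e) (hm : 1 ≤ m)
    (hbound : ∀ s ∈ Ioc 1 m, ∫⁻ x, F s x ^ 2 ∂ν ≤ ENNReal.ofReal (c * s ^ (e - 2))) :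
    ∫⁻ x, (∫⁻ s in Ioc 1 m, F s x) ^ 2 ∂ν ≤ ENNReal.ofReal (c * (2 / e) ^ 2 * m ^ e) := by
  set K := ∫⁻ s in Ioc 1 m, ENNReal.ofReal (s ^ (e / 2 - 1))
  have hK : K ≤ ENNReal.ofReal (2 / e * m ^ (e / 2)) :=
    (lintegral_Ioc_one_rpow_le (by linarith) hm).trans_eq (by rw [sub_add_cancel]; ring_nf)
  have hKtop : K ≠ ⊤ := ne_top_of_le_ne_top ENNReal.ofReal_ne_top hK
  have hweighted : ∀ x, (∫⁻ s in Ioc 1 m, F s x) ^ 2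
      ≤ K * ∫⁻ s in Ioc 1 m, ENNReal.ofReal (s ^ (1 - e / 2)) * F s x ^ 2 := by
    intro x
    refine (sq_lintegral_le_lintegral_inv_mul_lintegral_mul_sq (w := fun s => s ^ (1 - e / 2))
      (by fun_prop) ((ae_restrict_mem measurableSet_Ioc).mono fun s hs =>
        rpow_pos_of_pos (by linarith [hs.1]) _) (by fun_prop)).trans_eq ?_
    congr 1
    refine setLIntegral_congr_fun measurableSet_Ioc fun s hs => ?_
    rw [← rpow_neg (by linarith [hs.1]), neg_sub]
  calc ∫⁻ x, (∫⁻ s in Ioc 1 m, F s x) ^ 2 ∂ν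
      ≤ ∫⁻ x, (K * ∫⁻ s in Ioc 1 m, ENNReal.ofReal (s ^ (1 - e / 2)) * F s x ^ 2) ∂ν :=
        lintegral_mono hweighted
    _ = K * ∫⁻ s in Ioc 1 m, ENNReal.ofReal (s ^ (1 - e / 2)) * ∫⁻ x, F s x ^ 2 ∂ν := by
        rw [lintegral_const_mul' _ _ hKtop, lintegral_lintegral_swap (by fun_prop)]
        simp_rw [lintegral_const_mul' _ _ ENNReal.ofReal_ne_top]
    _ ≤ K * ∫⁻ s in Ioc 1 m,
          ENNReal.ofReal (s ^ (1 - e / 2)) * ENNReal.ofReal (c * s ^ (e - 2)) := by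
        gcongr K * ?_
        exact setLIntegral_mono' measurableSet_Ioc fun s hs => by gcongr; exact hbound s hs
    _ = K * (ENNReal.ofReal c * K) := by
        rw [← lintegral_const_mul' _ _ ENNReal.ofReal_ne_top]
        congr 1
        refine setLIntegral_congr_fun measurableSet_Ioc fun s hs => ?_
        have hs0 : 0 < s := by linarith [hs.1]
        rw [← ENNReal.ofReal_mul (by positivity), ← ENNReal.ofReal_mul hc, mul_left_comm,
          ← rpow_add hs0]
        ring_nf
    _ ≤ ENNReal.ofReal (2 / e * m ^ (e / 2))
          * (ENNReal.ofReal c * ENNReal.ofReal (2 / e * m ^ (e / 2))) := by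
        gcongr
    _ = ENNReal.ofReal (c * (2 / e) ^ 2 * m ^ e) := by
        rw [← ENNReal.ofReal_mul hc, ← ENNReal.ofReal_mul (by positivity)]
        congr 1
        rw [show m ^ e = m ^ (e / 2) * m ^ (e / 2) by rw [← rpow_add (by linarith)]; ring_nf]
        ring

@[fun_prop]
lemma Measurable.rho {α : Type*} [MeasurableSpace α] {f g : α → ℝ} (hf : Measurable f)
    (hg : Measurable g) (q1 q2 : ℝ) : Measurable fun a => rho q1 q2 (f a) (g a) := by
  unfold _root_.rho; fun_prop

lemma rho_nonneg (q1 q2 t s : ℝ) : 0 ≤ rho q1 q2 t s := by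
  unfold rho; positivity

lemma rho_le_rho_of_le {q1 q2 u t : ℝ} (hq1 : 0 ≤ q1) (hu : 0 < u) (hut : u ≤ t) (w : ℝ) :
    rho q1 q2 t w ≤ rho q1 q2 u w := by
  unfold rho
  rw [abs_of_pos hu, abs_of_pos (hu.trans_le hut)]
  exact inv_anti₀ (by have := rpow_pos_of_pos hu q1; positivity) (by gcongr)

lemma rho_add_le_max_rpow {q1 q2 u s v : ℝ} (hq2 : 0 < q2) (hu : 0 ≤ u) (hs : 0 < s)
    (hv : 0 ≤ v) : rho q1 q2 u (s + v) ≤ max (max (u ^ (q1 / q2)) s) v ^ (-q2) := by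
  have hsv : s ^ q2 ≤ (s + v) ^ q2 := by gcongr; linarith
  have hvv : v ^ q2 ≤ (s + v) ^ q2 := by gcongr; linarith
  have hu' : 0 ≤ u ^ q1 := rpow_nonneg hu q1
  have hX : 0 < u ^ q1 + (s + v) ^ q2 := by have := rpow_pos_of_pos hs q2; linarith
  have hm0 : 0 < max (max (u ^ (q1 / q2)) s) v := lt_max_of_lt_left (lt_max_of_lt_right hs)
  have hm : max (max (u ^ (q1 / q2)) s) v ≤ (u ^ q1 + (s + v) ^ q2) ^ q2⁻¹ := by
    refine max_le (max_le ?_ ?_) ?_ <;>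
      rw [le_rpow_inv_iff_of_pos (by positivity) hX.le hq2]
    · rw [← rpow_mul hu, div_mul_cancel₀ _ hq2.ne']; linarith [rpow_pos_of_pos hs q2]
    · linarith
    · linarith
  unfold rho
  rw [abs_of_nonneg hu, abs_of_pos (by linarith), rpow_neg hm0.le]
  exact inv_anti₀ (rpow_pos_of_pos hm0 _)
    ((rpow_le_rpow hm0.le hm hq2.le).trans_eq (rpow_inv_rpow hX.le hq2.ne'))

lemma lintegral_rho_sq_le {q1 q2 u s : ℝ} (hq2 : 1 < 2 * q2) (hu : 0 ≤ u) (hs : 0 < s) :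
    ∫⁻ v in Ioi 0, ENNReal.ofReal (rho q1 q2 u (s + v)) ^ 2
      ≤ ENNReal.ofReal (2 * q2 / (2 * q2 - 1) * max (u ^ (q1 / q2)) s ^ (1 - 2 * q2)) := by
  have ha : 0 < max (u ^ (q1 / q2)) s := lt_max_of_lt_right hs
  rw [← lintegral_Ioi_max_rpow_neg ha hq2]
  refine setLIntegral_mono' measurableSet_Ioi fun v hv => ?_
  rw [← ENNReal.ofReal_pow (rho_nonneg _ _ _ _)]
  refine ENNReal.ofReal_le_ofReal ?_
  calc rho q1 q2 u (s + v) ^ 2 ≤ (max (max (u ^ (q1 / q2)) s) v ^ (-q2)) ^ 2 :=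
        pow_le_pow_left₀ (rho_nonneg _ _ _ _)
          (rho_add_le_max_rpow (by linarith) hu hs (le_of_lt hv)) 2
    _ = max (max (u ^ (q1 / q2)) s) v ^ (-(2 * q2)) := by
        rw [← rpow_natCast, ← rpow_mul (ha.trans_le (le_max_left _ _)).le]
        ring_nf

lemma lintegral_lintegral_rho_sq_le {q1 q2 s : ℝ} (hq1 : 0 < q1) (hq2 : 1 < 2 * q2)
    (hp : 1 < 2 * q1 - q1 / q2) (hs : 0 < s) :
    ∫⁻ u in Ioi 0, ∫⁻ v in Ioi 0, ENNReal.ofReal (rho q1 q2 u (s + v)) ^ 2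
      ≤ ENNReal.ofReal (2 * q2 / (2 * q2 - 1) * ((2 * q1 - q1 / q2) / (2 * q1 - q1 / q2 - 1))
          * s ^ (1 + q2 / q1 - 2 * q2)) := by
  have hq2' : 0 < q2 := by linarith
  have hb : 0 < s ^ (q2 / q1) := rpow_pos_of_pos hs _
  have hc : 0 ≤ 2 * q2 / (2 * q2 - 1) := div_nonneg (by linarith) (by linarith)
  have hmax : ∀ u, 0 ≤ u → max (u ^ (q1 / q2)) s ^ (1 - 2 * q2)
      = max (s ^ (q2 / q1)) u ^ (-(2 * q1 - q1 / q2)) := by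
    intro u hu
    conv_lhs => rw [← rpow_rpow_inv hs.le (div_ne_zero hq2'.ne' hq1.ne'), inv_div]
    rw [max_comm, ← rpow_max hb.le hu (by positivity), ← rpow_mul (le_max_of_le_right hu)]
    congr 1
    field_simp
    ring
  calc ∫⁻ u in Ioi 0, ∫⁻ v in Ioi 0, ENNReal.ofReal (rho q1 q2 u (s + v)) ^ 2
      ≤ ∫⁻ u in Ioi 0, ENNReal.ofReal (2 * q2 / (2 * q2 - 1))
          * ENNReal.ofReal (max (s ^ (q2 / q1)) u ^ (-(2 * q1 - q1 / q2))) := by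
        refine setLIntegral_mono' measurableSet_Ioi fun u hu => ?_
        rw [← ENNReal.ofReal_mul hc, ← hmax u (le_of_lt hu)]
        exact lintegral_rho_sq_le hq2 (le_of_lt hu) hs
    _ = _ := by
        rw [lintegral_const_mul' _ _ ENNReal.ofReal_ne_top, lintegral_Ioi_max_rpow_neg hb hp,
          ← ENNReal.ofReal_mul hc, ← rpow_mul hs.le, mul_assoc]
        congr 4
        field_simp
        ring

lemma ofReal_sq_integral_rho_le {q1 q2 u v : ℝ} (hq1 : 0 ≤ q1) (hu : 0 < u) (S : Set ℝ) :
    ENNReal.ofReal ((∫ t in Ioc 0 1, ∫ s in S, rho q1 q2 (t + u) (s + v)) ^ 2)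
      ≤ (∫⁻ s in S, ENNReal.ofReal (rho q1 q2 u (s + v))) ^ 2 := by
  rw [← sq_abs, ENNReal.ofReal_pow (abs_nonneg _), ← Real.enorm_eq_ofReal_abs]
  gcongr
  calc ‖∫ t in Ioc (0 : ℝ) 1, ∫ s in S, rho q1 q2 (t + u) (s + v)‖ₑ
      ≤ ∫⁻ t in Ioc 0 1, ‖∫ s in S, rho q1 q2 (t + u) (s + v)‖ₑ :=
        enorm_integral_le_lintegral_enorm _
    _ ≤ ∫⁻ _ in Ioc (0 : ℝ) 1, ∫⁻ s in S, ENNReal.ofReal (rho q1 q2 u (s + v)) := by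
        refine setLIntegral_mono' measurableSet_Ioc fun t ht => ?_
        refine (enorm_integral_le_lintegral_enorm _).trans (lintegral_mono fun s => ?_)
        rw [Real.enorm_eq_ofReal (rho_nonneg _ _ _ _)]
        exact ENNReal.ofReal_le_ofReal (rho_le_rho_of_le hq1 hu (by linarith [ht.1]) _)
    _ = ∫⁻ s in S, ENNReal.ofReal (rho q1 q2 u (s + v)) := by
        rw [setLIntegral_const, Real.volume_Ioc, sub_zero, ENNReal.ofReal_one, mul_one]

lemma exponents_of_inv_add_inv_lt_one {q1 q2 : ℝ} (hq1 : 0 < q1) (hq2 : 0 < q2)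
    (hQ : 1 / q1 + 1 / q2 < 1) : 1 < 2 * q2 ∧ 1 < 2 * q1 - q1 / q2 := by
  rw [div_add_div _ _ hq1.ne' hq2.ne', div_lt_one (by positivity)] at hQ
  have : q1 / q2 < 2 * q1 - 1 := by rw [div_lt_iff₀ hq2]; nlinarith
  constructor <;> nlinarith

theorem stmt_10_general (q1 q2 : ℝ) (hq1 : 0 < q1) (hq2 : 0 < q2)
    (hQ : 1 / q1 + 1 / q2 < 1)
    (h1 : 1 < 1 / (2 * q1) + 3 / (2 * q2)) :
    ∃ C : ℝ, ∀ μ : ℝ, 2 ≤ μ →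
      ∫⁻ u in Ioi (0 : ℝ), ∫⁻ v in Ioi (0 : ℝ),
        ENNReal.ofReal ((∫ t in Ioc (0 : ℝ) 1, ∫ s in Ioc (1 : ℝ) μ,
          rho q1 q2 (t + u) (s + v)) ^ 2)
        ≤ ENNReal.ofReal (C * μ ^ (3 + q2 / q1 - 2 * q2)) := by
  obtain ⟨hq2', hp⟩ := exponents_of_inv_add_inv_lt_one hq1 hq2 hQ
  have he : 0 < 3 + q2 / q1 - 2 * q2 := by
    have : 3 + q2 / q1 - 2 * q2 = 2 * q2 * (1 / (2 * q1) + 3 / (2 * q2) - 1) := by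
      field_simp; ring
    rw [this]
    exact mul_pos (by positivity) (by linarith)
  set c := 2 * q2 / (2 * q2 - 1) * ((2 * q1 - q1 / q2) / (2 * q1 - q1 / q2 - 1))
  have hc : 0 ≤ c := by
    have : 0 < 2 * q1 - q1 / q2 - 1 := by linarith
    have : 0 < 2 * q2 - 1 := by linarith
    positivity
  refine ⟨c * (2 / (3 + q2 / q1 - 2 * q2)) ^ 2, fun μ hμ => ?_⟩
  calc _ ≤ ∫⁻ u in Ioi (0 : ℝ), ∫⁻ v in Ioi (0 : ℝ),
          (∫⁻ s in Ioc 1 μ, ENNReal.ofReal (rho q1 q2 u (s + v))) ^ 2 :=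
        setLIntegral_mono' measurableSet_Ioi fun u hu =>
          setLIntegral_mono' measurableSet_Ioi fun v _ => ofReal_sq_integral_rho_le hq1.le hu _
    _ = ∫⁻ x, (∫⁻ s in Ioc 1 μ, ENNReal.ofReal (rho q1 q2 x.1 (s + x.2))) ^ 2
          ∂((volume.restrict (Ioi 0)).prod (volume.restrict (Ioi 0))) := by
        rw [lintegral_prod _ (by fun_prop)]
    _ ≤ _ := by
        refine lintegral_sq_lintegral_Ioc_le
          (F := fun s (x : ℝ × ℝ) => ENNReal.ofReal (rho q1 q2 x.1 (s + x.2)))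
          (by fun_prop) hc he (by linarith) fun s hs => ?_
        rw [lintegral_prod _ (by fun_prop)]
        refine (lintegral_lintegral_rho_sq_le hq1 hq2' hp (by linarith [hs.1])).trans_eq ?_
        rw [show 3 + q2 / q1 - 2 * q2 - 2 = 1 + q2 / q1 - 2 * q2 by ring]

theorem stmt_10 (q1 q2 : ℝ) (hq1 : 0 < q1) (hq2 : 0 < q2)
    (hQ : 1 / q1 + 1 / q2 < 1)
    (h1 : 1 < 1 / (2 * q1) + 3 / (2 * q2)) (h2 : q2 ≠ 3 / 2) :
    ∃ C : ℝ, ∀ μ : ℝ, 2 ≤ μ →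
      ∫⁻ u in Ioi (0 : ℝ), ∫⁻ v in Ioi (0 : ℝ),
        ENNReal.ofReal ((∫ t in Ioc (0 : ℝ) 1, ∫ s in Ioc (1 : ℝ) μ,
          rho q1 q2 (t + u) (s + v)) ^ 2)
        ≤ ENNReal.ofReal (C * μ ^ (3 + q2 / q1 - 2 * q2)) :=
  stmt_10_general q1 q2 hq1 hq2 hQ h1
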